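/- Let μ̂ₙ be the empirical mean of n i.i.d. random variables with values in [0,1] and mean μ, and let γ > 0. Conditioned on the (independent) event that at least m samples were taken, P(μ̂ - μ ≥ γ | number of samples ≥ m) ≤ exp(-2mγ²), provided the number of samples is independent of the sample values. -/

import Mathlib

/-!
On the event `T = n` the empirical mean is a function of the samples alone, and since `T` is
independent of the samples, `P(μ̂ - μ ≥ γ, T = n) = P(T = n) P(μ̂ₙ - μ ≥ γ)`. Hoeffding's inequality
bounds the second factor by `exp(-2nγ²) ≤ exp(-2mγ²)` whenever `n ≥ m`; summing over `n ≥ m`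
gives the claim.
-/

open MeasureTheory ProbabilityTheory Finset Real
open scoped ENNReal

section

variable {Ω : Type*} [MeasurableSpace Ω] {P : Measure Ω}

theorem ProbabilityTheory.IndepFun.measure_mem_indexed_le_mul {ι β : Type*} [Countable ι]
    [MeasurableSpace ι] [MeasurableSingletonClass ι] [MeasurableSpace β] {T : Ω → ι} {Y : Ω → β}
    (hT : Measurable T) (hTY : IndepFun T Y P) {s : Set ι} {B : ι → Set β}
    (hB : ∀ i ∈ s, MeasurableSet (B i)) {c : ℝ≥0∞} (hc : ∀ i ∈ s, P (Y ⁻¹' B i) ≤ c) :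
    P {ω | T ω ∈ s ∧ Y ω ∈ B (T ω)} ≤ P (T ⁻¹' s) * c := by
  have hunion : {ω | T ω ∈ s ∧ Y ω ∈ B (T ω)} = ⋃ i : s, T ⁻¹' {(i : ι)} ∩ Y ⁻¹' B i := by
    ext ω
    simp
  calc P {ω | T ω ∈ s ∧ Y ω ∈ B (T ω)}
      ≤ ∑' i : s, P (T ⁻¹' {(i : ι)} ∩ Y ⁻¹' B i) := hunion ▸ measure_iUnion_le _
    _ = ∑' i : s, P (T ⁻¹' {(i : ι)}) * P (Y ⁻¹' B i) := tsum_congr fun i =>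
        hTY.measure_inter_preimage_eq_mul _ _ (measurableSet_singleton _) (hB i i.2)
    _ ≤ ∑' i : s, P (T ⁻¹' {(i : ι)}) * c :=
        ENNReal.tsum_le_tsum fun i => by gcongr; exact hc i i.2
    _ = P (T ⁻¹' s) * c := by
        rw [ENNReal.tsum_mul_right,
          tsum_measure_preimage_singleton s.to_countable fun i _ => hT (measurableSet_singleton i)]

theorem measureReal_empiricalMean_sub_ge_le [IsProbabilityMeasure P] {X : ℕ → Ω → ℝ}
    (hindep : iIndepFun X P) (hmeas : ∀ k, AEMeasurable (X k) P) {a b : ℝ}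
    (hab : ∀ k, ∀ᵐ ω ∂P, X k ω ∈ Set.Icc a b) {μ : ℝ} (hmean : ∀ k, P[X k] = μ)
    {γ : ℝ} (hγ : 0 ≤ γ) (n : ℕ) :
    P.real {ω | γ ≤ (∑ k ∈ range n, X k ω) / n - μ} ≤ exp (-2 * n * γ ^ 2 / (b - a) ^ 2) := by
  rcases n.eq_zero_or_pos with rfl | hn
  · simp [measureReal_le_one]
  have hn' : (0 : ℝ) < n := Nat.cast_pos.mpr hn
  have hcentered : iIndepFun (fun k ω => X k ω - μ) P :=
    hindep.comp (fun _ x => x - μ) fun _ => measurable_id.sub_const μ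
  have hsubG : ∀ k < n, HasSubgaussianMGF (fun ω => X k ω - μ) ((‖b - a‖₊ / 2) ^ 2) P :=
    fun k _ => hmean k ▸ hasSubgaussianMGF_of_mem_Icc (hmeas k) (hab k)
  have hevent : {ω | γ ≤ (∑ k ∈ range n, X k ω) / n - μ}
      = {ω | n * γ ≤ ∑ k ∈ range n, (X k ω - μ)} := by
    ext ω
    simp only [Set.mem_ofPred_eq, sum_sub_distrib, sum_const, card_range, nsmul_eq_mul,
      le_sub_iff_add_le, le_div_iff₀ hn']
    constructor <;> intro h <;> linarith
  rw [hevent]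
  refine (HasSubgaussianMGF.measure_sum_range_ge_le_of_iIndepFun hcentered hsubG
    (by positivity)).trans_eq ?_
  congr 1
  push_cast
  rw [Real.norm_eq_abs, div_pow, sq_abs]
  rcases eq_or_ne ((b - a) ^ 2) 0 with hba | hba
  · simp [hba]
  · field_simp

end

theorem hoeffding_random_sample_size_general
    {Ω : Type*} [MeasurableSpace Ω] (P : Measure Ω) [IsProbabilityMeasure P]
    (X : ℕ → Ω → ℝ) (μ : ℝ)
    (hmeas : ∀ k, Measurable (X k))
    (hrange : ∀ k ω, X k ω ∈ Set.Icc (0:ℝ) 1)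
    (hindep : iIndepFun X P)
    (hmean : ∀ k, ∫ ω, X k ω ∂P = μ)
    (T : Ω → ℕ) (hT : Measurable T)
    (hTX : IndepFun T (fun ω => (fun k => X k ω)) P)
    (γ : ℝ) (hγ : 0 < γ) (m : ℕ) :
    P {ω | (∑ k ∈ Finset.range (T ω), X k ω) / (T ω : ℝ) - μ ≥ γ ∧ m ≤ T ω}
      ≤ P {ω | m ≤ T ω} * ENNReal.ofReal (Real.exp (-2 * (m : ℝ) * γ ^ 2)) := by
  have hB : ∀ n ∈ Set.Ici m, MeasurableSet {f : ℕ → ℝ | γ ≤ (∑ k ∈ range n, f k) / n - μ} :=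
    fun n _ => measurableSet_le measurable_const (by fun_prop)
  have htail : ∀ n ∈ Set.Ici m, P ((fun ω k => X k ω) ⁻¹'
      {f : ℕ → ℝ | γ ≤ (∑ k ∈ range n, f k) / n - μ}) ≤ ENNReal.ofReal (exp (-2 * m * γ ^ 2)) := by
    intro n hn
    rw [← ofReal_measureReal]
    refine ENNReal.ofReal_le_ofReal ((measureReal_empiricalMean_sub_ge_le hindep
      (fun k => (hmeas k).aemeasurable) (fun k => ae_of_all _ (hrange k)) hmean hγ.le n).trans ?_)
    have hmn : (m : ℝ) ≤ n := Nat.cast_le.mpr hn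
    simpa using exp_le_exp.mpr (by nlinarith [sq_nonneg γ])
  calc P {ω | (∑ k ∈ Finset.range (T ω), X k ω) / (T ω : ℝ) - μ ≥ γ ∧ m ≤ T ω}
      = P {ω | T ω ∈ Set.Ici m ∧ (fun k => X k ω) ∈
          {f : ℕ → ℝ | γ ≤ (∑ k ∈ range (T ω), f k) / T ω - μ}} := by
        simp only [ge_iff_le, Set.mem_Ici, Set.mem_ofPred_eq, and_comm]
    _ ≤ _ := hTX.measure_mem_indexed_le_mul hT hB htail

/-- Hoeffding bound with an independent random sample size: if the sample count `T` is
independent of the i.i.d. `[0,1]`-valued samples with mean `μ`, then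
`P(μ̂ - μ ≥ γ, T ≥ m) ≤ P(T ≥ m) exp(-2mγ²)`. -/
theorem hoeffding_random_sample_size
    {Ω : Type*} [MeasurableSpace Ω] (P : Measure Ω) [IsProbabilityMeasure P]
    (X : ℕ → Ω → ℝ) (μ : ℝ)
    (hmeas : ∀ k, Measurable (X k))
    (hrange : ∀ k ω, X k ω ∈ Set.Icc (0:ℝ) 1)
    (hindep : iIndepFun X P)
    (hident : ∀ k, Measure.map (X k) P = Measure.map (X 0) P)
    (hmean : ∀ k, ∫ ω, X k ω ∂P = μ)
    (T : Ω → ℕ) (hT : Measurable T) (hT1 : ∀ ω, 1 ≤ T ω)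
    (hTX : IndepFun T (fun ω => (fun k => X k ω)) P)
    (γ : ℝ) (hγ : 0 < γ) (m : ℕ) :
    P {ω | (∑ k ∈ Finset.range (T ω), X k ω) / (T ω : ℝ) - μ ≥ γ ∧ m ≤ T ω}
      ≤ P {ω | m ≤ T ω} * ENNReal.ofReal (Real.exp (-2 * (m : ℝ) * γ ^ 2)) :=
  hoeffding_random_sample_size_general P X μ hmeas hrange hindep hmean T hT hTX γ hγ m
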